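/- arXiv:2406.13567 — 3 statements merged into one kernel-verified Lean document; each statement's English description precedes it below -/
import Mathlib

section
/- Let H be a Hilbert space, u ∈ L²(Ω; H), and let K = T T* with T g = ∫ u(ω) g(ω) dω, with eigenpairs (σ_i², ζ_i), σ₁² ≥ σ₂² ≥ …, ζ_i orthonormal. Then for every L, the subspace V_L = span{ζ₁,…,ζ_L} minimizes ‖u − P_{W} u‖²_{L²(Ω;H)} over all subspaces W ⊂ H of dimension ≤ L, where P_W is the orthogonal projection onto W, and the minimum equals ∑_{i>L} σ_i². -/
open MeasureTheory Filter
open scoped ComplexConjugate Topology ENNReal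

section Aux

local notation "⟪" x ", " y "⟫" => @inner ℂ _ _ x y

variable {Ω : Type*} [MeasurableSpace Ω] {ν : Measure Ω} [IsProbabilityMeasure ν]
    {H : Type*} [NormedAddCommGroup H] [InnerProductSpace ℂ H] [CompleteSpace H]

set_option linter.unusedSectionVars false




lemma aux_orth_le {H : Type*} [NormedAddCommGroup H] [InnerProductSpace ℂ H]
    {x y : H} (V : Submodule ℂ H) (hyV : y ∈ V)
    (horth : ∀ w ∈ V, ⟪x - y, w⟫ = 0) :
    Metric.infDist x (V : Set H) = ‖x - y‖ := by
  refine le_antisymm ?_ ?_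
  · simpa [dist_eq_norm] using Metric.infDist_le_dist_of_mem hyV
  · by_contra hlt
    push_neg at hlt
    obtain ⟨y', hy'V, hy'⟩ := (Metric.infDist_lt_iff ⟨y, hyV⟩).1 hlt
    have hle : ‖x - y‖ ≤ ‖x - y'‖ := by
      have h0 : ⟪x - y, y - y'⟫ = 0 := horth _ (V.sub_mem hyV hy'V)
      have : ‖x - y'‖ ^ 2 = ‖x - y‖ ^ 2 + ‖y - y'‖ ^ 2 := by
        have hxy : x - y' = (x - y) + (y - y') := by abel
        rw [hxy, @norm_add_sq ℂ, h0]
        simp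
      nlinarith [norm_nonneg (x - y), norm_nonneg (x - y'), norm_nonneg (y - y')]
    rw [dist_eq_norm] at hy'
    linarith

lemma aux_infDist_sq {H : Type*} [NormedAddCommGroup H] [InnerProductSpace ℂ H]
    {n : ℕ} (e : Fin n → H) (he : Orthonormal ℂ e) (x : H) :
    Metric.infDist x (Submodule.span ℂ (Set.range e) : Set H) ^ 2
      = ‖x‖ ^ 2 - ∑ j, ‖⟪e j, x⟫‖ ^ 2 := by
  classical
  set V := Submodule.span ℂ (Set.range e) with hV
  set y := ∑ j, ⟪e j, x⟫ • e j with hy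
  have hyV : y ∈ V :=
    Submodule.sum_mem _ fun j _ => Submodule.smul_mem _ _ (Submodule.subset_span ⟨j, rfl⟩)
  have horth : ∀ w ∈ V, ⟪x - y, w⟫ = 0 := by
    intro w hw
    refine Submodule.span_induction ?_ ?_ ?_ ?_ hw
    · rintro w ⟨k, rfl⟩
      rw [inner_sub_left]
      have h1 : ⟪e k, y⟫ = ⟪e k, x⟫ := he.inner_right_fintype _ k
      have h2 : ⟪y, e k⟫ = ⟪x, e k⟫ := by
        rw [← inner_conj_symm, h1, inner_conj_symm]
      rw [h2, sub_self]
    · simp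
    · intro a b _ _ ha hb; rw [inner_add_right, ha, hb, add_zero]
    · intro a w _ hw'; rw [inner_smul_right, hw', mul_zero]
  have hdist : Metric.infDist x (V : Set H) = ‖x - y‖ := aux_orth_le V hyV horth
  have hyx : ⟪x - y, y⟫ = 0 := horth _ hyV
  have hpyth : ‖x‖ ^ 2 = ‖x - y‖ ^ 2 + ‖y‖ ^ 2 := by
    have hxy : x = (x - y) + y := by abel
    nth_rewrite 1 [hxy]
    rw [@norm_add_sq ℂ, hyx]
    simp
  have hynorm : ‖y‖ ^ 2 = ∑ j, ‖⟪e j, x⟫‖ ^ 2 := by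
    have := he.inner_sum (fun j => ⟪e j, x⟫) (fun j => ⟪e j, x⟫) Finset.univ
    rw [← hy] at this
    have hre : RCLike.re (⟪y, y⟫) = ‖y‖ ^ 2 := inner_self_eq_norm_sq y
    rw [this] at hre
    rw [← hre]
    rw [map_sum]
    congr 1; ext j
    rw [RCLike.conj_mul]
    norm_cast
  rw [hdist]
  rw [hynorm] at hpyth
  linarith

lemma aux_maj (σ : ℕ → ℝ) (hnn : ∀ i, 0 ≤ σ i) (hmono : Antitone σ) (hsum : Summable σ)
    (c : ℕ → ℝ) (h0 : ∀ i, 0 ≤ c i) (h1 : ∀ i, c i ≤ 1) (hc : Summable c) (L : ℕ)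
    (hcL : ∑' i, c i ≤ (L : ℝ)) :
    ∑' i, σ i * c i ≤ ∑ i ∈ Finset.range L, σ i := by
  have hsc : Summable (fun i => σ i * c i) := by
    refine Summable.of_nonneg_of_le (fun i => mul_nonneg (hnn i) (h0 i)) (fun i => ?_) hsum
    calc σ i * c i ≤ σ i * 1 := by
          exact mul_le_mul_of_nonneg_left (h1 i) (hnn i)
      _ = σ i := mul_one _
  rw [← hsc.sum_add_tsum_nat_add L]
  have htail : ∑' i, σ (i + L) * c (i + L) ≤ σ L * ∑' i, c (i + L) := by
    rw [← tsum_mul_left]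
    refine Summable.tsum_le_tsum (fun i => ?_) (hsc.comp_injective (add_left_injective L))
      ((hc.comp_injective (add_left_injective L)).mul_left _)
    exact mul_le_mul_of_nonneg_right (hmono (Nat.le_add_left L i)) (h0 _)
  have htail2 : ∑' i, c (i + L) ≤ (L : ℝ) - ∑ i ∈ Finset.range L, c i := by
    have := hc.sum_add_tsum_nat_add L
    linarith [this, hcL]
  have h3 : σ L * ∑' i, c (i + L) ≤ σ L * ((L : ℝ) - ∑ i ∈ Finset.range L, c i) :=
    mul_le_mul_of_nonneg_left htail2 (hnn L)
  have h4 : ∑ i ∈ Finset.range L, σ i * c i + σ L * ((L : ℝ) - ∑ i ∈ Finset.range L, c i)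
      ≤ ∑ i ∈ Finset.range L, σ i := by
    have : σ L * ((L : ℝ) - ∑ i ∈ Finset.range L, c i)
        = ∑ i ∈ Finset.range L, σ L * (1 - c i) := by
      simp only [mul_sub, Finset.sum_sub_distrib, Finset.mul_sum, mul_one,
        Finset.sum_const, Finset.card_range, nsmul_eq_mul, mul_comm]
    rw [this, ← Finset.sum_add_distrib]
    refine Finset.sum_le_sum fun i hi => ?_
    have hiL : σ L ≤ σ i := hmono (Finset.mem_range.1 hi).le
    nlinarith [h0 i, h1 i, hnn i]
  linarith


lemma aux_memL2_inner (u : Ω → H) (hu : MemLp u 2 ν) (v : H) :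
    MemLp (fun ω => ⟪u ω, v⟫) 2 ν := by
  have hcont : Continuous fun x : H => ⟪x, v⟫ := by
    have : (fun x : H => ⟪x, v⟫) = fun x => conj ⟪v, x⟫ := by
      ext x; rw [inner_conj_symm]
    rw [this]
    exact RCLike.continuous_conj.comp (innerSL ℂ v).continuous
  refine MemLp.of_le_mul (c := ‖v‖) hu (hcont.comp_aestronglyMeasurable hu.1)
    (Filter.Eventually.of_forall fun ω => ?_)
  calc ‖⟪u ω, v⟫‖ ≤ ‖u ω‖ * ‖v‖ := norm_inner_le_norm _ _
    _ = ‖v‖ * ‖u ω‖ := mul_comm _ _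

lemma aux_keyA (u : Ω → H) (hu : MemLp u 2 ν)
    (T : Lp ℂ 2 ν →L[ℂ] H)
    (hT : ∀ g : Lp ℂ 2 ν, T g = ∫ ω, g ω • u ω ∂ν) (v : H) :
    ∫ ω, ‖⟪v, u ω⟫‖ ^ 2 ∂ν
      = RCLike.re ⟪v, (T.comp (ContinuousLinearMap.adjoint T)) v⟫ := by
  have hmv := aux_memL2_inner u hu v
  set f : Lp ℂ 2 ν := hmv.toLp _ with hf
  have hfcoe : f =ᵐ[ν] fun ω => ⟪u ω, v⟫ := hmv.coeFn_toLp
  have hadj : (ContinuousLinearMap.adjoint T) v = f := by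
    refine ext_inner_left ℂ fun g => ?_
    rw [ContinuousLinearMap.adjoint_inner_right, hT g]
    have hint : Integrable (fun ω => (g : Ω → ℂ) ω • u ω) ν := by
      rw [← memLp_one_iff_integrable]
      have := hu.smul (Lp.memLp g) (p := 2) (q := 2) (r := 1)
      exact this
    have hL : ⟪∫ ω, (g : Ω → ℂ) ω • u ω ∂ν, v⟫
        = ∫ ω, conj ((g : Ω → ℂ) ω) * ⟪u ω, v⟫ ∂ν := by
      rw [← inner_conj_symm, ← integral_inner hint v, ← integral_conj]
      refine integral_congr_ae (Filter.Eventually.of_forall fun ω => ?_)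
      simp only [inner_smul_right, map_mul, inner_conj_symm]
    rw [hL, L2.inner_def]
    refine integral_congr_ae ?_
    filter_upwards [hfcoe] with ω hω
    rw [RCLike.inner_apply, hω, mul_comm]
  have hKv : ⟪v, (T.comp (ContinuousLinearMap.adjoint T)) v⟫ = ⟪f, f⟫ := by
    rw [ContinuousLinearMap.comp_apply, ← ContinuousLinearMap.adjoint_inner_left, hadj]
  rw [hKv, L2.inner_def, ← integral_re (L2.integrable_inner f f)]
  refine (integral_congr_ae ?_).symm
  filter_upwards [hfcoe] with ω hω
  rw [hω]
  have : RCLike.re ⟪(⟪u ω, v⟫ : ℂ), (⟪u ω, v⟫ : ℂ)⟫ = ‖(⟪u ω, v⟫ : ℂ)‖ ^ 2 :=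
    inner_self_eq_norm_sq _
  rw [this, norm_inner_symm]




lemma aux_keyB (K : H →L[ℂ] H)
    (σsq : ℕ → ℝ) (hnn : ∀ i, 0 ≤ σsq i) (hmono : Antitone σsq)
    (ζ : ℕ → H) (hζ : Orthonormal ℂ ζ)
    (hexp : ∀ x : H, K x = ∑' i, ((σsq i : ℂ) * ⟪ζ i, x⟫) • ζ i) (v : H) :
    RCLike.re ⟪v, K v⟫ = ∑' i, σsq i * ‖⟪ζ i, v⟫‖ ^ 2 := by
  have hbes : Summable (fun i => ‖⟪ζ i, v⟫‖ ^ 2) := hζ.inner_products_summable v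
  have hR : Summable (fun i => σsq i * ‖⟪ζ i, v⟫‖ ^ 2) := by
    refine Summable.of_nonneg_of_le (fun i => mul_nonneg (hnn i) (sq_nonneg _))
      (fun i => ?_) (hbes.mul_left (σsq 0))
    exact mul_le_mul_of_nonneg_right (hmono (Nat.zero_le i)) (sq_nonneg _)
  have h2 : Summable (fun i => ‖(σsq i : ℂ) * ⟪ζ i, v⟫‖ ^ 2) := by
    refine Summable.of_nonneg_of_le (fun i => sq_nonneg _) (fun i => ?_)
      (hbes.mul_left ((σsq 0) ^ 2))
    rw [norm_mul, mul_pow, Complex.norm_real, Real.norm_eq_abs, abs_of_nonneg (hnn i)]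
    have : σsq i ^ 2 ≤ σsq 0 ^ 2 := by
      have := hmono (Nat.zero_le i); nlinarith [hnn i]
    exact mul_le_mul_of_nonneg_right this (sq_nonneg _)
  have hsumv : Summable (fun i => ((σsq i : ℂ) * ⟪ζ i, v⟫) • ζ i) := by
    have := ((hζ.orthogonalFamily).summable_iff_norm_sq_summable
      (fun i => (σsq i : ℂ) * ⟪ζ i, v⟫)).2
    simpa [LinearIsometry.toSpanSingleton_apply] using this h2
  have h3 : ⟪v, K v⟫ = ∑' i, ((σsq i : ℂ) * ⟪ζ i, v⟫) * ⟪v, ζ i⟫ := by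
    calc ⟪v, K v⟫ = innerSL ℂ v (∑' i, ((σsq i : ℂ) * ⟪ζ i, v⟫) • ζ i) := by
          rw [hexp v]; rfl
      _ = ∑' i, innerSL ℂ v (((σsq i : ℂ) * ⟪ζ i, v⟫) • ζ i) :=
          (innerSL ℂ v).map_tsum hsumv
      _ = ∑' i, ((σsq i : ℂ) * ⟪ζ i, v⟫) * ⟪v, ζ i⟫ := by
          simp only [innerSL_apply_apply, inner_smul_right]
  have h4 : ∀ i, ((σsq i : ℂ) * ⟪ζ i, v⟫) * ⟪v, ζ i⟫
      = ((σsq i * ‖⟪ζ i, v⟫‖ ^ 2 : ℝ) : ℂ) := by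
    intro i
    have hconj : ⟪v, ζ i⟫ = conj ⟪ζ i, v⟫ := (inner_conj_symm _ _).symm
    rw [hconj, mul_assoc, Complex.mul_conj, Complex.normSq_eq_norm_sq]
    push_cast
    ring
  rw [h3]
  have h5 : (∑' i, ((σsq i : ℂ) * ⟪ζ i, v⟫) * ⟪v, ζ i⟫)
      = ((∑' i, σsq i * ‖⟪ζ i, v⟫‖ ^ 2 : ℝ) : ℂ) := by
    rw [tsum_congr h4]
    exact (Complex.ofReal_tsum _).symm
  rw [h5]
  simp

theorem stmt_10' (u : Ω → H) (hu : MemLp u 2 ν)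
    (T : Lp ℂ 2 ν →L[ℂ] H)
    (hT : ∀ g : Lp ℂ 2 ν, T g = ∫ ω, g ω • u ω ∂ν)
    (σsq : ℕ → ℝ) (hnn : ∀ i, 0 ≤ σsq i) (hmono : Antitone σsq)
    (ζ : ℕ → H) (hζ : Orthonormal ℂ ζ)
    (heig : ∀ i, (T.comp (ContinuousLinearMap.adjoint T)) (ζ i) = (σsq i : ℂ) • ζ i)
    (hexp : ∀ x : H, (T.comp (ContinuousLinearMap.adjoint T)) x =
      ∑' i, ((σsq i : ℂ) * (inner ℂ (ζ i) x : ℂ)) • ζ i)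
    (L : ℕ) :
    ((∫ ω, Metric.infDist (u ω) (Submodule.span ℂ (ζ '' Set.Iio L) : Set H) ^ 2 ∂ν) =
        ∑' i : ℕ, if L ≤ i then σsq i else 0) ∧
      ∀ (W : Submodule ℂ H), FiniteDimensional ℂ W → Module.finrank ℂ W ≤ L →
        (∫ ω, Metric.infDist (u ω) (Submodule.span ℂ (ζ '' Set.Iio L) : Set H) ^ 2 ∂ν) ≤
          ∫ ω, Metric.infDist (u ω) (W : Set H) ^ 2 ∂ν := by
  classical
  have hKA : ∀ v : H, ∫ ω, ‖⟪v, u ω⟫‖ ^ 2 ∂ν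
      = RCLike.re ⟪v, (T.comp (ContinuousLinearMap.adjoint T)) v⟫ := aux_keyA u hu T hT
  have hKB : ∀ v : H, RCLike.re ⟪v, (T.comp (ContinuousLinearMap.adjoint T)) v⟫
      = ∑' i, σsq i * ‖⟪ζ i, v⟫‖ ^ 2 :=
    aux_keyB (T.comp (ContinuousLinearMap.adjoint T)) σsq hnn hmono ζ hζ hexp
  -- integrability of ‖u‖²
  have hu2 : Integrable (fun ω => ‖u ω‖ ^ 2) ν := by
    have h := hu.norm_rpow (by norm_num) (by norm_num)
    rw [memLp_one_iff_integrable] at h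
    have h2 : (2 : ℝ≥0∞).toReal = 2 := by norm_num
    refine h.congr (Filter.Eventually.of_forall fun ω => ?_)
    show ‖u ω‖ ^ (2 : ℝ≥0∞).toReal = ‖u ω‖ ^ (2 : ℕ)
    rw [h2, show (2:ℝ) = ((2:ℕ):ℝ) by norm_num, Real.rpow_natCast]
  have hinner_int : ∀ v : H, Integrable (fun ω => ‖⟪v, u ω⟫‖ ^ 2) ν := by
    intro v
    have hc : Continuous fun x : H => ‖⟪v, x⟫‖ ^ 2 := ((innerSL ℂ v).continuous.norm).pow 2
    refine Integrable.mono' (hu2.const_mul (‖v‖ ^ 2))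
      (hc.comp_aestronglyMeasurable hu.1) (Filter.Eventually.of_forall fun ω => ?_)
    rw [Real.norm_eq_abs, abs_of_nonneg (sq_nonneg _)]
    have := norm_inner_le_norm (𝕜 := ℂ) v (u ω)
    nlinarith [norm_nonneg (u ω), norm_nonneg v, norm_nonneg (⟪v, u ω⟫ : ℂ)]
  -- eigenvalue identity
  have hsig : ∀ i, ∫ ω, ‖⟪ζ i, u ω⟫‖ ^ 2 ∂ν = σsq i := by
    intro i
    rw [hKA, heig i, inner_smul_right]
    have h1 : ⟪ζ i, ζ i⟫ = 1 := by
      have := hζ.1 i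
      rw [@inner_self_eq_norm_sq_to_K ℂ, this]
      norm_num
    rw [h1, mul_one]
    simp
  -- the subspaces V n
  set V : ℕ → Submodule ℂ H := fun n => Submodule.span ℂ (ζ '' Set.Iio n) with hVdef
  have hVmono : Monotone V := fun a b hab =>
    Submodule.span_mono (Set.image_mono (Set.Iio_subset_Iio hab))
  have hrange : ∀ n : ℕ, ζ '' Set.Iio n = Set.range (fun j : Fin n => ζ j) := by
    intro n; ext x
    constructor
    · rintro ⟨i, hi, rfl⟩; exact ⟨⟨i, hi⟩, rfl⟩
    · rintro ⟨j, rfl⟩; exact ⟨j, j.2, rfl⟩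
  have hdist : ∀ (n : ℕ) (x : H), Metric.infDist x (V n : Set H) ^ 2
      = ‖x‖ ^ 2 - ∑ i ∈ Finset.range n, ‖⟪ζ i, x⟫‖ ^ 2 := by
    intro n x
    have he : Orthonormal ℂ (fun j : Fin n => ζ j) := hζ.comp Fin.val Fin.val_injective
    have h := aux_infDist_sq (fun j : Fin n => ζ j) he x
    rw [hVdef]
    simp only [hrange n]
    rw [h, Fin.sum_univ_eq_sum_range (fun i => ‖⟪ζ i, x⟫‖ ^ 2) n]
  set I : ℝ := ∫ ω, ‖u ω‖ ^ 2 ∂ν with hIdef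
  have hIn : ∀ n : ℕ, ∫ ω, Metric.infDist (u ω) (V n : Set H) ^ 2 ∂ν
      = I - ∑ i ∈ Finset.range n, σsq i := by
    intro n
    have h1 : ∀ ω, Metric.infDist (u ω) (V n : Set H) ^ 2
        = ‖u ω‖ ^ 2 - ∑ i ∈ Finset.range n, ‖⟪ζ i, u ω⟫‖ ^ 2 := fun ω => hdist n (u ω)
    calc ∫ ω, Metric.infDist (u ω) (V n : Set H) ^ 2 ∂ν
        = ∫ ω, (‖u ω‖ ^ 2 - ∑ i ∈ Finset.range n, ‖⟪ζ i, u ω⟫‖ ^ 2) ∂ν := by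
          exact integral_congr_ae (Filter.Eventually.of_forall h1)
      _ = I - ∫ ω, ∑ i ∈ Finset.range n, ‖⟪ζ i, u ω⟫‖ ^ 2 ∂ν := by
          rw [integral_sub hu2 (integrable_finset_sum _ fun i _ => hinner_int (ζ i))]
      _ = I - ∑ i ∈ Finset.range n, σsq i := by
          rw [integral_finset_sum _ fun i _ => hinner_int (ζ i)]
          congr 1
          exact Finset.sum_congr rfl fun i _ => hsig i
  -- vanishing on the orthogonal complement of E
  set E : Submodule ℂ H := (Submodule.span ℂ (Set.range ζ)).topologicalClosure with hEdef
  haveI hEc : CompleteSpace E := (Submodule.isClosed_topologicalClosure _).completeSpace_coe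
  have hvanish : ∀ v : H, v ∈ Eᗮ → ∀ᵐ ω ∂ν, ⟪v, u ω⟫ = 0 := by
    intro v hv
    have hQ : ∫ ω, ‖⟪v, u ω⟫‖ ^ 2 ∂ν = 0 := by
      rw [hKA v, hKB v]
      have hz : ∀ i, ⟪ζ i, v⟫ = (0 : ℂ) := fun i =>
        (Submodule.mem_orthogonal E v).1 hv (ζ i)
          (Submodule.le_topologicalClosure _ (Submodule.subset_span ⟨i, rfl⟩))
      simp [hz]
    have h0 := (integral_eq_zero_iff_of_nonneg (fun ω => sq_nonneg _) (hinner_int v)).1 hQ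
    filter_upwards [h0] with ω hω
    have : ‖⟪v, u ω⟫‖ ^ 2 = 0 := hω
    have h2 : ‖⟪v, u ω⟫‖ = 0 := by nlinarith [norm_nonneg (⟪v, u ω⟫ : ℂ)]
    exact norm_eq_zero.1 h2
  -- a.e. membership in E
  have hmem : ∀ᵐ ω ∂ν, u ω ∈ E := by
    set P : H → H := fun x => x - ((E.orthogonalProjectionOnto x : E) : H) with hPdef
    have hPcont : Continuous P :=
      continuous_id.sub ((E.subtypeL.comp (E.orthogonalProjectionOnto)).continuous)
    have hPmem : ∀ x, P x ∈ Eᗮ := fun x => E.sub_starProjection_mem_orthogonal x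
    have hPfix : ∀ x, x ∈ Eᗮ → P x = x := by
      intro x hx
      have h := Submodule.orthogonalProjectionOnto_apply_of_mem_orthogonal hx
      show x - ((E.orthogonalProjectionOnto x : E) : H) = x
      rw [h]; simp
    have hwmeas : AEStronglyMeasurable (fun ω => P (u ω)) ν :=
      hPcont.comp_aestronglyMeasurable hu.1
    obtain ⟨w', hw'sm, hww'⟩ := hwmeas
    obtain ⟨t0, ht0c, ht0sub⟩ := hw'sm.isSeparable_range
    set D : Set H := P '' t0 with hDdef
    have hDc : D.Countable := ht0c.image P
    have hDsub : ∀ v ∈ D, v ∈ Eᗮ := by rintro v ⟨x, -, rfl⟩; exact hPmem x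
    have hzero : ∀ᵐ ω ∂ν, ∀ v ∈ D, ⟪v, u ω⟫ = 0 :=
      (ae_ball_iff hDc).2 fun v hv => hvanish v (hDsub v hv)
    have hclos : ∀ᵐ ω ∂ν, P (u ω) ∈ closure D := by
      filter_upwards [hww'] with ω hω
      have h1 : w' ω ∈ closure t0 := ht0sub ⟨ω, rfl⟩
      have h2 : P (u ω) ∈ closure t0 := by rw [hω]; exact h1
      have h3 : P (P (u ω)) ∈ closure (P '' t0) :=
        image_closure_subset_closure_image hPcont ⟨_, h2, rfl⟩
      rwa [hPfix _ (hPmem (u ω))] at h3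
    filter_upwards [hzero, hclos] with ω h1 h2
    have hw0 : P (u ω) = 0 := by
      have hsub : D ⊆ {x : H | ⟪x, P (u ω)⟫ = 0} := by
        intro v hv
        have hvE : v ∈ Eᗮ := hDsub v hv
        have hproj : ⟪v, ((E.orthogonalProjectionOnto (u ω) : E) : H)⟫ = 0 :=
          (Submodule.mem_orthogonal' E v).1 hvE _ (E.orthogonalProjectionOnto (u ω)).2
        simp only [Set.mem_setOf_eq, hPdef]
        rw [inner_sub_right, h1 v hv, hproj, sub_zero]
      have hcont2 : Continuous fun x : H => ⟪x, P (u ω)⟫ := by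
        have : (fun x : H => ⟪x, P (u ω)⟫) = fun x => conj ⟪P (u ω), x⟫ := by
          ext x; rw [inner_conj_symm]
        rw [this]
        exact RCLike.continuous_conj.comp (innerSL ℂ (P (u ω))).continuous
      have hclosed : IsClosed {x : H | ⟪x, P (u ω)⟫ = 0} :=
        isClosed_eq hcont2 continuous_const
      have hPin : P (u ω) ∈ {x : H | ⟪x, P (u ω)⟫ = 0} :=
        closure_minimal hsub hclosed h2
      exact inner_self_eq_zero.1 hPin
    have : u ω = ((E.orthogonalProjectionOnto (u ω) : E) : H) := by
      have := sub_eq_zero.1 hw0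
      simpa using this
    rw [this]
    exact (E.orthogonalProjectionOnto (u ω)).2
  -- a.e. convergence of squared distances to 0
  have haeconv : ∀ᵐ ω ∂ν,
      Tendsto (fun n => Metric.infDist (u ω) (V n : Set H) ^ 2) atTop (𝓝 0) := by
    filter_upwards [hmem] with ω hωE
    have h0 : Tendsto (fun n => Metric.infDist (u ω) (V n : Set H)) atTop (𝓝 0) := by
      refine Metric.tendsto_atTop.2 fun ε hε => ?_
      have hcl : u ω ∈ closure ((Submodule.span ℂ (Set.range ζ) : Set H)) := by
        rw [← Submodule.topologicalClosure_coe]; exact hωE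
      obtain ⟨y, hy, hdy⟩ := Metric.mem_closure_iff.1 hcl ε hε
      have hyspan : y ∈ Submodule.span ℂ (Set.range ζ) := hy
      obtain ⟨n, hn⟩ : ∃ n, y ∈ V n := by
        have hU : ⋃ n : ℕ, ζ '' Set.Iio n = Set.range ζ := by
          ext x
          simp only [Set.mem_iUnion, Set.mem_image, Set.mem_Iio, Set.mem_range]
          constructor
          · rintro ⟨n, i, -, rfl⟩; exact ⟨i, rfl⟩
          · rintro ⟨i, rfl⟩; exact ⟨i + 1, i, Nat.lt_succ_self i, rfl⟩
        rw [← hU, Submodule.span_iUnion] at hyspan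
        exact (Submodule.mem_iSup_of_directed _ (hVmono.directed_le)).1 hyspan
      refine ⟨n, fun m hm => ?_⟩
      have hyVm : y ∈ V m := hVmono hm hn
      have hle : Metric.infDist (u ω) (V m : Set H) ≤ dist (u ω) y :=
        Metric.infDist_le_dist_of_mem hyVm
      rw [Real.dist_eq, sub_zero, abs_of_nonneg Metric.infDist_nonneg]
      exact lt_of_le_of_lt hle hdy
    simpa using h0.pow 2
  -- dominated convergence
  have htendI : Tendsto (fun n => ∫ ω, Metric.infDist (u ω) (V n : Set H) ^ 2 ∂ν)
      atTop (𝓝 0) := by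
    have hbound : ∀ n : ℕ, ∀ᵐ ω ∂ν,
        ‖Metric.infDist (u ω) (V n : Set H) ^ 2‖ ≤ ‖u ω‖ ^ 2 := by
      intro n
      refine Filter.Eventually.of_forall fun ω => ?_
      rw [Real.norm_eq_abs, abs_of_nonneg (sq_nonneg _)]
      have h1 : Metric.infDist (u ω) (V n : Set H) ≤ ‖u ω‖ := by
        have := Metric.infDist_le_dist_of_mem (x := u ω) ((V n).zero_mem)
        rwa [dist_zero_right] at this
      nlinarith [Metric.infDist_nonneg (x := u ω) (s := (V n : Set H))]
    have h := tendsto_integral_of_dominated_convergence (μ := ν)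
      (F := fun n ω => Metric.infDist (u ω) (V n : Set H) ^ 2)
      (f := fun _ => (0 : ℝ)) (bound := fun ω => ‖u ω‖ ^ 2)
      (fun n => ((Metric.continuous_infDist_pt (V n : Set H)).pow 2).comp_aestronglyMeasurable
        hu.1)
      hu2 hbound haeconv
    simpa using h
  -- σsq sums to I
  have hHasSum : HasSum σsq I := by
    have h1 : Tendsto (fun n => ∑ i ∈ Finset.range n, σsq i) atTop (𝓝 I) := by
      have h2 : Tendsto (fun n => I - (I - ∑ i ∈ Finset.range n, σsq i)) atTop (𝓝 (I - 0)) := by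
        refine Tendsto.sub tendsto_const_nhds ?_
        have := htendI
        simp only [hIn] at this
        exact this
      simpa using h2
    exact (hasSum_iff_tendsto_nat_of_nonneg hnn I).2 h1
  constructor
  · -- equality part
    have hfin : HasSum (fun i => if L ≤ i then (0 : ℝ) else σsq i)
        (∑ i ∈ Finset.range L, σsq i) := by
      have h := hasSum_sum_of_ne_finset_zero (L := SummationFilter.unconditional ℕ) (s := Finset.range L)
        (f := fun i => if L ≤ i then (0 : ℝ) else σsq i)
        (by intro b hb
            simp only [Finset.mem_range, not_lt] at hb
            simp [hb])
      have heq : ∑ i ∈ Finset.range L, (if L ≤ i then (0 : ℝ) else σsq i)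
          = ∑ i ∈ Finset.range L, σsq i := by
        refine Finset.sum_congr rfl fun i hi => ?_
        rw [if_neg (not_le.2 (Finset.mem_range.1 hi))]
      rwa [heq] at h
    have hmain : HasSum (fun i => if L ≤ i then σsq i else 0)
        (I - ∑ i ∈ Finset.range L, σsq i) := by
      have h := hHasSum.sub hfin
      have heq : (fun i => σsq i - if L ≤ i then (0 : ℝ) else σsq i)
          = fun i => if L ≤ i then σsq i else 0 := by
        funext i
        by_cases hLe : L ≤ i <;> simp [hLe]
      rwa [heq] at h
    rw [show Submodule.span ℂ (ζ '' Set.Iio L) = V L from rfl, hIn L, ← hmain.tsum_eq]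
  · -- minimality part
    intro W hWfd hWrank
    haveI := hWfd
    set m := Module.finrank ℂ W with hm
    set b := stdOrthonormalBasis ℂ W with hb
    set e : Fin m → H := fun j => ((b j : W) : H) with he_def
    have he : Orthonormal ℂ e := by
      constructor
      · intro j
        have := b.orthonormal.1 j
        exact this
      · intro j k hjk
        have := b.orthonormal.2 hjk
        rw [he_def]
        rw [← Submodule.coe_inner]
        exact this
    have hspan : Submodule.span ℂ (Set.range e) = W := by
      have h1 : Set.range e = (W.subtype) '' Set.range b := by
        rw [← Set.range_comp]; rfl
      rw [h1, Submodule.span_image]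
      have h2 : Submodule.span ℂ (Set.range ⇑b) = (⊤ : Submodule ℂ W) := by
        have := b.toBasis.span_eq
        rwa [b.coe_toBasis] at this
      rw [h2, Submodule.map_subtype_top]
    have hWdist : ∀ x : H, Metric.infDist x (W : Set H) ^ 2
        = ‖x‖ ^ 2 - ∑ j, ‖⟪e j, x⟫‖ ^ 2 := by
      intro x
      rw [← hspan]
      exact aux_infDist_sq e he x
    have hWint : ∫ ω, Metric.infDist (u ω) (W : Set H) ^ 2 ∂ν
        = I - ∑ j, ∑' i, σsq i * ‖⟪ζ i, e j⟫‖ ^ 2 := by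
      calc ∫ ω, Metric.infDist (u ω) (W : Set H) ^ 2 ∂ν
          = ∫ ω, (‖u ω‖ ^ 2 - ∑ j, ‖⟪e j, u ω⟫‖ ^ 2) ∂ν :=
            integral_congr_ae (Filter.Eventually.of_forall fun ω => hWdist (u ω))
        _ = I - ∫ ω, ∑ j, ‖⟪e j, u ω⟫‖ ^ 2 ∂ν := by
            rw [integral_sub hu2 (integrable_finset_sum _ fun j _ => hinner_int (e j))]
        _ = I - ∑ j, ∑' i, σsq i * ‖⟪ζ i, e j⟫‖ ^ 2 := by
            rw [integral_finset_sum _ fun j _ => hinner_int (e j)]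
            congr 1
            refine Finset.sum_congr rfl fun j _ => ?_
            rw [hKA (e j), hKB (e j)]
    -- the combinatorial bound
    set c : ℕ → ℝ := fun i => ∑ j, ‖⟪ζ i, e j⟫‖ ^ 2 with hc_def
    have hbes_e : ∀ j : Fin m, Summable fun i => ‖⟪ζ i, e j⟫‖ ^ 2 := fun j =>
      hζ.inner_products_summable (e j)
    have hsum_each : ∀ j : Fin m, Summable (fun i => σsq i * ‖⟪ζ i, e j⟫‖ ^ 2) := by
      intro j
      refine Summable.of_nonneg_of_le (fun i => mul_nonneg (hnn i) (sq_nonneg _))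
        (fun i => ?_) ((hbes_e j).mul_left (σsq 0))
      exact mul_le_mul_of_nonneg_right (hmono (Nat.zero_le i)) (sq_nonneg _)
    have hcsummable : Summable c :=
      (hasSum_sum (fun j _ => (hbes_e j).hasSum)).summable
    have hc0 : ∀ i, 0 ≤ c i := fun i => Finset.sum_nonneg fun j _ => sq_nonneg _
    have hc1 : ∀ i, c i ≤ 1 := by
      intro i
      have h := he.sum_inner_products_le (ζ i) (s := Finset.univ)
      have hnormζ : ‖ζ i‖ = 1 := hζ.1 i
      have heq : ∀ j : Fin m, ‖⟪e j, ζ i⟫‖ = ‖⟪ζ i, e j⟫‖ := fun j => norm_inner_symm _ _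
      calc c i = ∑ j, ‖⟪e j, ζ i⟫‖ ^ 2 := by
            refine Finset.sum_congr rfl fun j _ => ?_
            rw [heq j]
        _ ≤ ‖ζ i‖ ^ 2 := h
        _ = 1 := by rw [hnormζ]; norm_num
    have hcL : ∑' i, c i ≤ (L : ℝ) := by
      have h1 : ∑' i, c i = ∑ j, ∑' i, ‖⟪ζ i, e j⟫‖ ^ 2 :=
        Summable.tsum_finsetSum fun j _ => hbes_e j
      have h2 : ∀ j : Fin m, ∑' i, ‖⟪ζ i, e j⟫‖ ^ 2 ≤ 1 := by
        intro j
        have h := hζ.tsum_inner_products_le (e j)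
        have : ‖e j‖ = 1 := he.1 j
        rw [this] at h
        simpa using h
      calc ∑' i, c i = ∑ j, ∑' i, ‖⟪ζ i, e j⟫‖ ^ 2 := h1
        _ ≤ ∑ _j : Fin m, (1 : ℝ) := Finset.sum_le_sum fun j _ => h2 j
        _ = (m : ℝ) := by simp
        _ ≤ (L : ℝ) := by exact_mod_cast hWrank
    have hkey : ∑ j, ∑' i, σsq i * ‖⟪ζ i, e j⟫‖ ^ 2 ≤ ∑ i ∈ Finset.range L, σsq i := by
      have hswap : ∑ j, ∑' i, σsq i * ‖⟪ζ i, e j⟫‖ ^ 2 = ∑' i, σsq i * c i := by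
        rw [← Summable.tsum_finsetSum fun j _ => hsum_each j]
        refine tsum_congr fun i => ?_
        rw [hc_def, Finset.mul_sum]
      rw [hswap]
      exact aux_maj σsq hnn hmono hHasSum.summable c hc0 hc1 hcsummable L hcL
    rw [show Submodule.span ℂ (ζ '' Set.Iio L) = V L from rfl, hIn L, hWint]
    linarith

end Aux

/-- continuous POD optimality: let `u ∈ L²(Ω;H)` (`Ω` a probability space),
`T g = ∫ u(ω) g(ω) dω`, and `K = T T*` with eigenpairs `(σ_i², ζ_i)`, `σ₁² ≥ σ₂² ≥ … ≥ 0`,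
`ζ_i` orthonormal, together with the spectral expansion of `K`. Then for every `L`, the
subspace `V_L = span{ζ₁,…,ζ_L}` minimizes `‖u − P_W u‖²_{L²(Ω;H)}` over all subspaces
`W ⊂ H` with `dim W ≤ L` (here `‖u(ω) − P_W u(ω)‖ = dist(u(ω), W)`), and the minimum
equals `∑_{i>L} σ_i²`. -/
theorem stmt_10 {Ω : Type*} [MeasurableSpace Ω] (ν : Measure Ω) [IsProbabilityMeasure ν]
    {H : Type*} [NormedAddCommGroup H] [InnerProductSpace ℂ H] [CompleteSpace H]
    (u : Ω → H) (hu : MemLp u 2 ν)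
    (T : Lp ℂ 2 ν →L[ℂ] H)
    (hT : ∀ g : Lp ℂ 2 ν, T g = ∫ ω, g ω • u ω ∂ν)
    (σsq : ℕ → ℝ) (hnn : ∀ i, 0 ≤ σsq i) (hmono : Antitone σsq)
    (ζ : ℕ → H) (hζ : Orthonormal ℂ ζ)
    (heig : ∀ i, (T.comp (ContinuousLinearMap.adjoint T)) (ζ i) = (σsq i : ℂ) • ζ i)
    (hexp : ∀ x : H, (T.comp (ContinuousLinearMap.adjoint T)) x =
      ∑' i, ((σsq i : ℂ) * (inner ℂ (ζ i) x : ℂ)) • ζ i)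
    (L : ℕ) :
    ((∫ ω, Metric.infDist (u ω) (Submodule.span ℂ (ζ '' Set.Iio L) : Set H) ^ 2 ∂ν) =
        ∑' i : ℕ, if L ≤ i then σsq i else 0) ∧
      ∀ (W : Submodule ℂ H), FiniteDimensional ℂ W → Module.finrank ℂ W ≤ L →
        (∫ ω, Metric.infDist (u ω) (Submodule.span ℂ (ζ '' Set.Iio L) : Set H) ^ 2 ∂ν) ≤
          ∫ ω, Metric.infDist (u ω) (W : Set H) ^ 2 ∂ν := by
  exact stmt_10' (ν := ν) u hu T hT σsq hnn hmono ζ hζ heig hexp L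
end

section
/- Let V be a complex Hilbert space, a: V × V → ℂ a bounded sesquilinear form satisfying the inf-sup conditions inf_{v≠0} sup_{w≠0} |a(v,w)|/(‖v‖‖w‖) ≥ α > 0 and sup_{v≠0} |a(v,w)| > 0 for all w ≠ 0. Then for every bounded antilinear functional ℓ on V there is a unique u ∈ V with a(u,w) = ℓ(w) for all w ∈ V, and ‖u‖ ≤ ‖ℓ‖/α. -/
open InnerProductSpace ComplexConjugate


/-- Banach–Nečas–Babuška on a Hilbert space: let `a` be a bounded
sesquilinear form on a complex Hilbert space `V` satisfying the inf-sup condition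
`inf_{v≠0} sup_{w≠0} |a(v,w)|/(‖v‖‖w‖) ≥ α > 0` and the nondegeneracy condition
`sup_v |a(v,w)| > 0` for all `w ≠ 0`. Then for every bounded antilinear functional `ℓ`
there is a unique `u` with `a(u,w) = ℓ(w)` for all `w`, and `‖u‖ ≤ ‖ℓ‖/α`. -/
theorem stmt_16 {V : Type*} [NormedAddCommGroup V] [InnerProductSpace ℂ V] [CompleteSpace V]
    (a : V →ₗ[ℂ] V →ₗ⋆[ℂ] ℂ) (M : ℝ)
    (hbdd : ∀ u v : V, ‖a u v‖ ≤ M * ‖u‖ * ‖v‖)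
    (α : ℝ) (hα : 0 < α)
    (hinfsup : ∀ v : V, v ≠ 0 →
      α ≤ ⨆ w : {w : V // w ≠ 0}, ‖a v w.1‖ / (‖v‖ * ‖w.1‖))
    (hnondeg : ∀ w : V, w ≠ 0 → ∃ v : V, a v w ≠ 0)
    (ℓ : V →SL[starRingEnd ℂ] ℂ) :
    (∃! u : V, ∀ w : V, a u w = ℓ w) ∧
      ∀ u : V, (∀ w : V, a u w = ℓ w) → ‖u‖ ≤ ‖ℓ‖ / α := by
  classical
  set C : ℝ := max M 0 with hC
  have hC0 : 0 ≤ C := le_max_right _ _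
  have hbddC : ∀ u v : V, ‖a u v‖ ≤ C * ‖u‖ * ‖v‖ := fun u v =>
    (hbdd u v).trans (by
      have : M * ‖u‖ * ‖v‖ ≤ C * ‖u‖ * ‖v‖ := by
        have := mul_nonneg (norm_nonneg u) (norm_nonneg v)
        nlinarith [le_max_left M 0]
      exact this)
  -- define T0 u such that a u w = ⟪w, T0 u⟫
  set T0 : V → V := fun u =>
    (InnerProductSpace.toDual ℂ V).symm <| LinearMap.mkContinuous
      { toFun := fun w => conj (a u w)
        map_add' := by intro x y; simp
        map_smul' := by intro c x; simp [mul_comm] }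
      (C * ‖u‖) (fun w => by
        simpa [mul_assoc] using hbddC u w) with hT0
  have key : ∀ u w : V, a u w = @inner ℂ V _ w (T0 u) := by
    intro u w
    rw [← inner_conj_symm]
    rw [hT0]
    simp only [InnerProductSpace.toDual_symm_apply]
    simp
  -- T0 is linear
  have hadd : ∀ u v : V, T0 (u + v) = T0 u + T0 v := by
    intro u v
    apply ext_inner_left ℂ
    intro w
    rw [← key, inner_add_right, ← key, ← key, map_add]
    simp
  have hsmul : ∀ (c : ℂ) (u : V), T0 (c • u) = c • T0 u := by
    intro c u
    apply ext_inner_left ℂ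
    intro w
    rw [← key, inner_smul_right, ← key, map_smul]
    simp
  have hnorm : ∀ u : V, ‖T0 u‖ ≤ C * ‖u‖ := by
    intro u
    rw [hT0]
    simp only [LinearIsometryEquiv.norm_map]
    exact LinearMap.mkContinuous_norm_le _ (mul_nonneg hC0 (norm_nonneg u)) _
  set T : V →L[ℂ] V :=
    LinearMap.mkContinuous
      { toFun := T0, map_add' := hadd, map_smul' := hsmul } C hnorm with hT
  have hTapp : ∀ u : V, T u = T0 u := fun u => rfl
  have keyT : ∀ u w : V, a u w = @inner ℂ V _ w (T u) := fun u w => key u w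
  -- lower bound
  have hlow : ∀ v : V, α * ‖v‖ ≤ ‖T v‖ := by
    intro v
    rcases eq_or_ne v 0 with rfl | hv
    · simp
    · have hv0 : (0:ℝ) < ‖v‖ := norm_pos_iff.mpr hv
      have hne : Nonempty {w : V // w ≠ 0} := ⟨⟨v, hv⟩⟩
      have hsup : (⨆ w : {w : V // w ≠ 0}, ‖a v w.1‖ / (‖v‖ * ‖w.1‖)) ≤ ‖T v‖ / ‖v‖ := by
        apply ciSup_le
        intro w
        have hw0 : (0:ℝ) < ‖w.1‖ := norm_pos_iff.mpr w.2
        rw [div_le_div_iff₀ (by positivity) hv0]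
        have hcs : ‖a v w.1‖ ≤ ‖w.1‖ * ‖T v‖ := by
          rw [keyT]; exact norm_inner_le_norm _ _
        nlinarith
      have := (hinfsup v hv).trans hsup
      rw [le_div_iff₀ hv0] at this
      linarith
  have hinj : ∀ v : V, T v = 0 → v = 0 := by
    intro v hv
    have := hlow v
    rw [hv, norm_zero] at this
    have : ‖v‖ ≤ 0 := by nlinarith
    simpa [norm_le_zero_iff] using this
  -- closed range
  have hanti : AntilipschitzWith (⟨α, hα.le⟩ : NNReal)⁻¹ T := by
    apply T.antilipschitz_of_bound
    intro x
    have h1 := hlow x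
    show ‖x‖ ≤ α⁻¹ * ‖T x‖
    rw [← div_eq_inv_mul, le_div_iff₀ hα]
    linarith
  have hclosed : IsClosed (Set.range T) :=
    (hanti.isClosedEmbedding T.uniformContinuous).isClosed_range
  -- dense range
  have horth : (LinearMap.range (T : V →ₗ[ℂ] V))ᗮ = ⊥ := by
    rw [Submodule.eq_bot_iff]
    intro w hw
    by_contra hw0
    obtain ⟨v, hv⟩ := hnondeg w hw0
    apply hv
    have h0 : @inner ℂ V _ (T v) w = 0 :=
      hw (T v) (LinearMap.mem_range.mpr ⟨v, rfl⟩)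
    rw [keyT, ← inner_conj_symm, h0, map_zero]
  have hrange : LinearMap.range (T : V →ₗ[ℂ] V) = ⊤ := by
    have h1 : (LinearMap.range (T : V →ₗ[ℂ] V)).topologicalClosure = ⊤ :=
      Submodule.topologicalClosure_eq_top_iff.mpr horth
    have h2 : IsClosed ((LinearMap.range (T : V →ₗ[ℂ] V)) : Set V) := by
      have : (LinearMap.range (T : V →ₗ[ℂ] V) : Set V) = Set.range T := by
        ext x; simp [LinearMap.mem_range]
      rw [this]; exact hclosed
    rw [← h2.submodule_topologicalClosure_eq]
    exact h1
  -- Riesz representative of ℓ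
  set f : V := (InnerProductSpace.toDual ℂ V).symm <| LinearMap.mkContinuous
      { toFun := fun w => conj (ℓ w)
        map_add' := by intro x y; simp
        map_smul' := by intro c x; simp [mul_comm] }
      ‖ℓ‖ (fun w => by simpa using ℓ.le_opNorm w) with hf
  have hfkey : ∀ w : V, (ℓ w : ℂ) = @inner ℂ V _ w f := by
    intro w
    rw [← inner_conj_symm, hf]
    simp only [InnerProductSpace.toDual_symm_apply]
    simp
  obtain ⟨u0, hu0⟩ : ∃ u0 : V, T u0 = f := by
    have : f ∈ LinearMap.range (T : V →ₗ[ℂ] V) := hrange ▸ Submodule.mem_top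
    exact LinearMap.mem_range.mp this
  have hsol : ∀ w : V, a u0 w = ℓ w := by
    intro w; rw [keyT, hu0, hfkey]
  -- uniqueness
  have huniq : ∀ u : V, (∀ w : V, a u w = ℓ w) → u = u0 := by
    intro u hu
    have hz : ∀ w : V, a (u - u0) w = 0 := by
      intro w
      rw [map_sub]
      simp [hu w, hsol w]
    have hTz : T (u - u0) = 0 := by
      have h0 : @inner ℂ V _ (T (u - u0)) (T (u - u0)) = 0 := by
        rw [← keyT]; exact hz _
      exact inner_self_eq_zero.mp h0
    have := hinj _ hTz
    exact sub_eq_zero.mp this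
  -- norm bound
  have hbound : ∀ u : V, (∀ w : V, a u w = ℓ w) → ‖u‖ ≤ ‖ℓ‖ / α := by
    intro u hu
    have h1 : ‖T u‖ * ‖T u‖ ≤ ‖ℓ‖ * ‖T u‖ := by
      have e1 : (‖T u‖ : ℂ) ^ 2 = a u (T u) := by
        rw [keyT, inner_self_eq_norm_sq_to_K]
        norm_cast
      have e2 : ‖a u (T u)‖ ≤ ‖ℓ‖ * ‖T u‖ := by
        rw [hu]; exact ℓ.le_opNorm _
      calc ‖T u‖ * ‖T u‖ = ‖(‖T u‖ : ℂ) ^ 2‖ := by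
            rw [← Complex.ofReal_pow]; simp [sq, abs_of_nonneg]
        _ = ‖a u (T u)‖ := by rw [e1]
        _ ≤ ‖ℓ‖ * ‖T u‖ := e2
    have h2 : ‖T u‖ ≤ ‖ℓ‖ := by
      rcases eq_or_lt_of_le (norm_nonneg (T u)) with h | h
      · rw [← h]; exact norm_nonneg ℓ
      · exact le_of_mul_le_mul_right (by linarith) h
    have := (hlow u).trans h2
    rw [le_div_iff₀ hα]
    linarith
  exact ⟨⟨u0, hsol, huniq⟩, hbound⟩
end

section
/- Let V be a complex Hilbert space, a: V × V → ℂ a bounded sesquilinear form, and suppose there exist α > 0 and a compact operator K: V → V such that Re a(v,v) ≥ α‖v‖² − Re⟨Kv, v⟩ for all v ∈ V (Gårding inequality). If additionally the only u ∈ V with a(u,w)=0 for all w ∈ V is u = 0, then a satisfies an inf-sup condition: there exists β > 0 with inf_{v≠0} sup_{w≠0} |a(v,w)|/(‖v‖‖w‖) ≥ β. -/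
open scoped ComplexConjugate

/-- Gårding inequality + injectivity ⇒ inf-sup: let `a` be a bounded
sesquilinear form on a complex Hilbert space `V` with
`Re a(v,v) ≥ α‖v‖² − Re⟨Kv,v⟩` for some `α > 0` and a compact operator `K`. If the only
`u` with `a(u,w) = 0` for all `w` is `u = 0`, then `a` satisfies an inf-sup condition
with some constant `β > 0`. -/
theorem stmt_17 {V : Type*} [NormedAddCommGroup V] [InnerProductSpace ℂ V] [CompleteSpace V]
    (a : V →ₗ[ℂ] V →ₗ⋆[ℂ] ℂ) (M : ℝ)
    (hbdd : ∀ u v : V, ‖a u v‖ ≤ M * ‖u‖ * ‖v‖)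
    (α : ℝ) (hα : 0 < α)
    (K : V →L[ℂ] V) (hK : IsCompactOperator K)
    (hGarding : ∀ v : V, α * ‖v‖ ^ 2 - (inner ℂ (K v) v : ℂ).re ≤ (a v v).re)
    (hinj : ∀ u : V, (∀ w : V, a u w = 0) → u = 0) :
    ∃ β > 0, ∀ v : V, v ≠ 0 →
      β ≤ ⨆ w : {w : V // w ≠ 0}, ‖a v w.1‖ / (‖v‖ * ‖w.1‖) := by
  classical
  -- the conjugated form, conjugate-linear in the first variable, linear in the second
  let B₀ : V →ₗ⋆[ℂ] V →ₗ[ℂ] ℂ :=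
    { toFun := fun u =>
        { toFun := fun v => conj (a u v)
          map_add' := by intro x y; simp
          map_smul' := by intro c x; simp }
      map_add' := by intro x y; ext v; simp
      map_smul' := by intro c x; ext v; simp }
  have hB₀bdd : ∀ u v : V, ‖B₀ u v‖ ≤ max M 0 * ‖u‖ * ‖v‖ := by
    intro u v
    have h1 : ‖B₀ u v‖ = ‖a u v‖ := by
      simp [B₀]
    rw [h1]
    refine (hbdd u v).trans ?_
    have : M ≤ max M 0 := le_max_left _ _
    have h2 : (0:ℝ) ≤ ‖u‖ * ‖v‖ := by positivity
    nlinarith [norm_nonneg u, norm_nonneg v]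
  let B : V →L⋆[ℂ] V →L[ℂ] ℂ := B₀.mkContinuous₂ (max M 0) hB₀bdd
  let A : V →L[ℂ] V := InnerProductSpace.continuousLinearMapOfBilin B
  have hA : ∀ u w : V, (inner ℂ (A u) w : ℂ) = conj (a u w) := by
    intro u w
    exact InnerProductSpace.continuousLinearMapOfBilin_apply (𝕜 := ℂ) B u w
  have haa : ∀ u w : V, a u w = (inner ℂ w (A u) : ℂ) := by
    intro u w
    rw [← inner_conj_symm, hA]
    simp
  -- lower bound for A + K
  have hlow : ∀ v : V, α * ‖v‖ ≤ ‖A v + K v‖ := by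
    intro v
    have h1 : α * ‖v‖ ^ 2 ≤ ((inner ℂ (A v + K v) v : ℂ)).re := by
      rw [inner_add_left]
      have h2 : ((inner ℂ (A v) v : ℂ)).re = (a v v).re := by
        rw [hA]; simp
      have := hGarding v
      rw [Complex.add_re, h2]
      linarith
    have h3 : ((inner ℂ (A v + K v) v : ℂ)).re ≤ ‖A v + K v‖ * ‖v‖ := by
      refine le_trans ?_ (norm_inner_le_norm (𝕜 := ℂ) (A v + K v) v)
      exact Complex.re_le_norm _
    rcases eq_or_lt_of_le (norm_nonneg v) with h | h
    · rw [← h]; simp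
    · nlinarith
  -- A is bounded below
  have hbelow : ∃ c > 0, ∀ v : V, c * ‖v‖ ≤ ‖A v‖ := by
    by_contra hcon
    push_neg at hcon
    have hsel : ∀ n : ℕ, ∃ u : V, ‖u‖ = 1 ∧ ‖A u‖ < 1 / (n + 1) := by
      intro n
      obtain ⟨v, hv⟩ := hcon (1 / (n + 1)) (by positivity)
      have hv0 : v ≠ 0 := by
        rintro rfl; simp at hv
      refine ⟨((‖v‖⁻¹ : ℝ) : ℂ) • v, ?_, ?_⟩
      · rw [norm_smul]
        simp [norm_ne_zero_iff.mpr hv0]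
      · rw [map_smul, norm_smul]
        have hvpos : (0:ℝ) < ‖v‖ := norm_pos_iff.mpr hv0
        have : ‖((‖v‖⁻¹ : ℝ) : ℂ)‖ = ‖v‖⁻¹ := by
          simp [abs_of_nonneg (le_of_lt (inv_pos.mpr hvpos))]
        rw [this]
        calc ‖v‖⁻¹ * ‖A v‖ < ‖v‖⁻¹ * (1 / (n + 1) * ‖v‖) := by
              exact mul_lt_mul_of_pos_left hv (inv_pos.mpr hvpos)
          _ = 1 / (n + 1) := by field_simp
    choose u hu1 hu2 using hsel
    -- A (u n) → 0
    have hA0 : Filter.Tendsto (fun n => A (u n)) Filter.atTop (nhds 0) := by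
      have hb : Filter.Tendsto (fun n : ℕ => 1 / ((n : ℝ) + 1)) Filter.atTop (nhds 0) :=
        tendsto_one_div_add_atTop_nhds_zero_nat
      refine squeeze_zero_norm (fun n => (hu2 n).le) hb
    -- compactness of K
    have hKc : IsCompact (closure ((K : V →ₗ[ℂ] V) '' Metric.closedBall 0 1)) :=
      IsCompactOperator.isCompact_closure_image_closedBall (f := (K : V →ₗ[ℂ] V)) hK 1
    have hmem : ∀ n, K (u n) ∈ closure ((K : V →ₗ[ℂ] V) '' Metric.closedBall 0 1) := by
      intro n
      exact subset_closure ⟨u n, by simp [Metric.mem_closedBall, dist_eq_norm, hu1 n], rfl⟩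
    obtain ⟨w, -, φ, hφ, hconv⟩ := hKc.tendsto_subseq hmem
    have hφtop : Filter.Tendsto φ Filter.atTop Filter.atTop := hφ.tendsto_atTop
    have hA0' : Filter.Tendsto (fun n => A (u (φ n))) Filter.atTop (nhds 0) :=
      hA0.comp hφtop
    have hBconv : Filter.Tendsto (fun n => A (u (φ n)) + K (u (φ n))) Filter.atTop (nhds w) := by
      have := hA0'.add hconv
      simpa using this
    -- u ∘ φ is Cauchy
    have hcauchy : CauchySeq (fun n => u (φ n)) := by
      have hBc : CauchySeq (fun n => A (u (φ n)) + K (u (φ n))) := hBconv.cauchySeq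
      rw [Metric.cauchySeq_iff] at hBc ⊢
      intro ε hε
      obtain ⟨N, hN⟩ := hBc (α * ε) (by positivity)
      refine ⟨N, fun m hm n hn => ?_⟩
      have h1 := hN m hm n hn
      have h2 := hlow (u (φ m) - u (φ n))
      have h3 : A (u (φ m) - u (φ n)) + K (u (φ m) - u (φ n))
          = (A (u (φ m)) + K (u (φ m))) - (A (u (φ n)) + K (u (φ n))) := by
        rw [map_sub, map_sub]; abel
      rw [h3] at h2
      rw [dist_eq_norm] at h1 ⊢
      nlinarith [norm_nonneg (u (φ m) - u (φ n))]
    obtain ⟨v, hv⟩ := cauchySeq_tendsto_of_complete hcauchy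
    have hv1 : ‖v‖ = 1 := by
      have h1 : Filter.Tendsto (fun n => ‖u (φ n)‖) Filter.atTop (nhds ‖v‖) := hv.norm
      have h2 : Filter.Tendsto (fun n : ℕ => (1:ℝ)) Filter.atTop (nhds 1) := tendsto_const_nhds
      have : (fun n => ‖u (φ n)‖) = fun _ : ℕ => (1:ℝ) := funext fun n => hu1 (φ n)
      rw [this] at h1
      exact tendsto_nhds_unique h1 h2
    have hAv : A v = 0 := by
      have h1 : Filter.Tendsto (fun n => A (u (φ n))) Filter.atTop (nhds (A v)) :=
        (A.continuous.tendsto v).comp hv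
      exact tendsto_nhds_unique h1 hA0'
    have : v = 0 := hinj v fun w' => by rw [haa, hAv, inner_zero_right]
    rw [this] at hv1
    simp at hv1
  obtain ⟨c, hc, hcb⟩ := hbelow
  refine ⟨c, hc, fun v hv => ?_⟩
  have hvpos : (0:ℝ) < ‖v‖ := norm_pos_iff.mpr hv
  have hApos : (0:ℝ) < ‖A v‖ := lt_of_lt_of_le (by positivity) (hcb v)
  have hAne : A v ≠ 0 := norm_pos_iff.mp hApos
  have hbdd' : BddAbove (Set.range fun w : {w : V // w ≠ 0} => ‖a v w.1‖ / (‖v‖ * ‖w.1‖)) := by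
    refine ⟨max M 0, ?_⟩
    rintro x ⟨w, rfl⟩
    have hwpos : (0:ℝ) < ‖w.1‖ := norm_pos_iff.mpr w.2
    rw [div_le_iff₀ (by positivity)]
    calc ‖a v w.1‖ ≤ M * ‖v‖ * ‖w.1‖ := hbdd v w.1
      _ ≤ max M 0 * (‖v‖ * ‖w.1‖) := by
          have : M ≤ max M 0 := le_max_left _ _
          nlinarith [mul_nonneg (norm_nonneg v) (norm_nonneg w.1)]
  have hle : ‖a v (A v)‖ / (‖v‖ * ‖A v‖)
      ≤ ⨆ w : {w : V // w ≠ 0}, ‖a v w.1‖ / (‖v‖ * ‖w.1‖) :=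
    le_ciSup hbdd' ⟨A v, hAne⟩
  refine le_trans ?_ hle
  have hval : ‖a v (A v)‖ = ‖A v‖ ^ 2 := by
    rw [haa]
    rw [inner_self_eq_norm_sq_to_K]
    rw [norm_pow]
    simp
  rw [hval, le_div_iff₀ (by positivity)]
  have := hcb v
  nlinarith [norm_nonneg (A v)]
end
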